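/- arXiv:2003.06003 — 3 statements merged into one kernel-verified Lean document; each statement's English description precedes it below -/
import Mathlib

section
/- (Theorem 1) Let Σxx be an n×n real symmetric matrix, Σxy an n×m real matrix, Σyy an m×m real symmetric positive definite matrix, M a p×n real matrix, P a p×p real symmetric matrix, and λ ∈ ℝᵐ with λᵢ > 0 for all i; set S = diag(λ). Define A := −M Σxx Mᵀ + M Σxy S Σxyᵀ Mᵀ, B := M Σxy S, and D := Σyy⁻¹ + S. Then M (Σxx − Σxy (Σyy + S⁻¹)⁻¹ Σxyᵀ) Mᵀ ⪯ P if and only if the (p+m)×(p+m) block matrix [[P + A, B], [Bᵀ, D]] is positive semidefinite. -/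
/-!
By the Woodbury identity, `(Σyy + S⁻¹)⁻¹ = S - S D⁻¹ S`, so `P - M Σ⁺ Mᵀ` is exactly the Schur
complement `(P + A) - B D⁻¹ Bᵀ` of the positive definite block `D`, and a block matrix with a
positive definite lower-right block is positive semidefinite iff that Schur complement is.
-/

open Matrix

namespace Matrix

variable {ι α : Type*} [Fintype ι] [DecidableEq ι] [CommRing α]

/-- The Woodbury identity with `U = V = 1`. -/
theorem inv_add_nonsing_inv_eq_sub {Y S : Matrix ι ι α} (hY : IsUnit Y) (hS : IsUnit S)
    (hYS : IsUnit (Y⁻¹ + S)) :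
    (Y + S⁻¹)⁻¹ = S - S * (Y⁻¹ + S)⁻¹ * S := by
  have hSS : S⁻¹⁻¹ = S := nonsing_inv_nonsing_inv S ((isUnit_iff_isUnit_det S).mp hS)
  have h := add_mul_mul_inv_eq_sub S⁻¹ 1 Y 1 (isUnit_nonsing_inv_iff.mpr hS) hY
    (by simpa [hSS] using hYS)
  simpa [add_comm, hSS] using h

end Matrix

theorem stmt_3_general {n m p : ℕ} (Sxx : Matrix (Fin n) (Fin n) ℝ)
    (Sxy : Matrix (Fin n) (Fin m) ℝ)
    (Syy : Matrix (Fin m) (Fin m) ℝ) (hSyy : Syy.PosDef)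
    (M : Matrix (Fin p) (Fin n) ℝ)
    (P : Matrix (Fin p) (Fin p) ℝ)
    (l : Fin m → ℝ) (hl : ∀ i, 0 < l i)
    (S : Matrix (Fin m) (Fin m) ℝ) (hSdef : S = Matrix.diagonal l)
    (A : Matrix (Fin p) (Fin p) ℝ) (hA : A = -(M * Sxx * Mᵀ) + M * Sxy * S * Sxyᵀ * Mᵀ)
    (B : Matrix (Fin p) (Fin m) ℝ) (hB : B = M * Sxy * S)
    (D : Matrix (Fin m) (Fin m) ℝ) (hD : D = Syy⁻¹ + S) :
    (P - M * (Sxx - Sxy * (Syy + S⁻¹)⁻¹ * Sxyᵀ) * Mᵀ).PosSemidef ↔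
      (Matrix.fromBlocks (P + A) B Bᵀ D).PosSemidef := by
  subst hSdef hA hB hD
  have hS : (diagonal l).PosDef := PosDef.diagonal hl
  have hDpos : (Syy⁻¹ + diagonal l).PosDef := hSyy.inv.add hS
  have := hDpos.isUnit.invertible
  rw [← conjTranspose_eq_transpose_of_trivial (M * Sxy * diagonal l),
    PosDef.fromBlocks₂₂ _ _ hDpos,
    inv_add_nonsing_inv_eq_sub hSyy.isUnit hS.isUnit hDpos.isUnit]
  congr! 1
  simp only [conjTranspose_eq_transpose_of_trivial, transpose_mul, diagonal_transpose,
    Matrix.mul_sub, Matrix.sub_mul, Matrix.mul_assoc]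
  abel

/-- Theorem 1 of the paper: with S = diag(λ), λᵢ > 0,
A := −M Σxx Mᵀ + M Σxy S Σxyᵀ Mᵀ, B := M Σxy S, D := Σyy⁻¹ + S, we have
M (Σxx − Σxy (Σyy + S⁻¹)⁻¹ Σxyᵀ) Mᵀ ⪯ P  ↔  [[P + A, B], [Bᵀ, D]] ⪰ 0. -/
theorem stmt_3 {n m p : ℕ} (Sxx : Matrix (Fin n) (Fin n) ℝ) (hSxx : Sxx.IsSymm)
    (Sxy : Matrix (Fin n) (Fin m) ℝ)
    (Syy : Matrix (Fin m) (Fin m) ℝ) (hSyy : Syy.PosDef)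
    (M : Matrix (Fin p) (Fin n) ℝ)
    (P : Matrix (Fin p) (Fin p) ℝ) (hP : P.IsSymm)
    (l : Fin m → ℝ) (hl : ∀ i, 0 < l i)
    (S : Matrix (Fin m) (Fin m) ℝ) (hSdef : S = Matrix.diagonal l)
    (A : Matrix (Fin p) (Fin p) ℝ) (hA : A = -(M * Sxx * Mᵀ) + M * Sxy * S * Sxyᵀ * Mᵀ)
    (B : Matrix (Fin p) (Fin m) ℝ) (hB : B = M * Sxy * S)
    (D : Matrix (Fin m) (Fin m) ℝ) (hD : D = Syy⁻¹ + S) :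
    (P - M * (Sxx - Sxy * (Syy + S⁻¹)⁻¹ * Sxyᵀ) * Mᵀ).PosSemidef ↔
      (Matrix.fromBlocks (P + A) B Bᵀ D).PosSemidef :=
  stmt_3_general Sxx Sxy Syy hSyy M P l hl S hSdef A hA B hB D hD
end

section
/- Let Σxx be an n×n real symmetric matrix, Σxy an n×m real matrix, Σyy an m×m real symmetric positive definite matrix, M a p×n real matrix, P a p×p real symmetric matrix, and λ ∈ ℝᵐ with λᵢ > 0 for all i; set S = diag(λ), A := −M Σxx Mᵀ + M Σxy S Σxyᵀ Mᵀ, B := M Σxy S, D := Σyy⁻¹ + S. If the block matrix [[P + A, B], [Bᵀ, D]] is positive semidefinite, then the Kalman posterior covariance Σ⁺ := Σxx − Σxy (Σyy + S⁻¹)⁻¹ Σxyᵀ corresponding to measurement noise covariance R = S⁻¹ satisfies M Σ⁺ Mᵀ ⪯ P. -/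
open Matrix

/-!
The hypotheses make `S` and `D = Σyy⁻¹ + S` positive definite. By the Woodbury identity,
`(Σyy + S⁻¹)⁻¹ = S - S D⁻¹ S`, so `P - M Σ⁺ Mᵀ` is exactly the Schur complement
`(P + A) - B D⁻¹ Bᵀ` of the block `D` in the LMI matrix, which is positive semidefinite
as soon as the block matrix is.
-/

namespace Matrix

variable {m n : Type*} [Fintype m] [DecidableEq m] {K : Type*} [Field K]

theorem add_inv_inv_eq_sub {C S : Matrix m m K} (hC : IsUnit C) (hS : IsUnit S)
    (hCS : IsUnit (C⁻¹ + S)) :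
    (C + S⁻¹)⁻¹ = S - S * (C⁻¹ + S)⁻¹ * S := by
  have hSS : S⁻¹⁻¹ = S := nonsing_inv_nonsing_inv S ((isUnit_iff_isUnit_det S).mp hS)
  have := add_mul_mul_inv_eq_sub S⁻¹ 1 C 1 (isUnit_nonsing_inv_iff.mpr hS) hC
    (by simpa [hSS] using hCS)
  simpa [hSS, add_comm] using this

theorem kalman_posterior_eq {Sxx : Matrix n n K} {Sxy : Matrix n m K} {Syy S : Matrix m m K}
    (hSyy : IsUnit Syy) (hS : IsUnit S) (hD : IsUnit (Syy⁻¹ + S)) (hSt : Sᵀ = S) :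
    Sxx - Sxy * (Syy + S⁻¹)⁻¹ * Sxyᵀ
      = Sxx - Sxy * S * Sxyᵀ + Sxy * S * (Syy⁻¹ + S)⁻¹ * (Sxy * S)ᵀ := by
  rw [add_inv_inv_eq_sub hSyy hS hD, transpose_mul, hSt]
  simp only [Matrix.mul_sub, Matrix.sub_mul, Matrix.mul_assoc]
  abel

end Matrix

theorem stmt_4_general {n m p : ℕ} (Sxx : Matrix (Fin n) (Fin n) ℝ)
    (Sxy : Matrix (Fin n) (Fin m) ℝ)
    (Syy : Matrix (Fin m) (Fin m) ℝ) (hSyy : Syy.PosDef)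
    (M : Matrix (Fin p) (Fin n) ℝ)
    (P : Matrix (Fin p) (Fin p) ℝ)
    (l : Fin m → ℝ) (hl : ∀ i, 0 < l i)
    (S : Matrix (Fin m) (Fin m) ℝ) (hSdef : S = Matrix.diagonal l)
    (A : Matrix (Fin p) (Fin p) ℝ) (hA : A = -(M * Sxx * Mᵀ) + M * Sxy * S * Sxyᵀ * Mᵀ)
    (B : Matrix (Fin p) (Fin m) ℝ) (hB : B = M * Sxy * S)
    (D : Matrix (Fin m) (Fin m) ℝ) (hD : D = Syy⁻¹ + S)
    (hLMI : (Matrix.fromBlocks (P + A) B Bᵀ D).PosSemidef) :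
    (P - M * (Sxx - Sxy * (Syy + S⁻¹)⁻¹ * Sxyᵀ) * Mᵀ).PosSemidef := by
  have hS : S.PosDef := hSdef ▸ PosDef.diagonal hl
  have hDpos : D.PosDef := hD ▸ hSyy.inv.add hS
  have hSt : Sᵀ = S := by
    rw [← conjTranspose_eq_transpose_of_trivial]; exact hS.isHermitian.eq
  let := hDpos.isUnit.invertible
  have hSchur : (P + A - B * D⁻¹ * Bᵀ).PosSemidef := by
    rw [← conjTranspose_eq_transpose_of_trivial] at hLMI ⊢
    exact (PosDef.fromBlocks₂₂ (P + A) B hDpos).mp hLMI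
  rw [kalman_posterior_eq hSyy.isUnit hS.isUnit (hD ▸ hDpos.isUnit) hSt]
  convert hSchur using 1
  rw [hA, hB, hD]
  simp only [Matrix.mul_add, Matrix.add_mul, Matrix.mul_sub, Matrix.sub_mul, Matrix.mul_assoc,
    transpose_mul]
  abel

/-- Guarantee direction of Theorem 1: if the LMI block matrix
[[P + A, B], [Bᵀ, D]] is positive semidefinite, then the Kalman posterior
covariance Σ⁺ = Σxx − Σxy (Σyy + S⁻¹)⁻¹ Σxyᵀ satisfies M Σ⁺ Mᵀ ⪯ P. -/
theorem stmt_4 {n m p : ℕ} (Sxx : Matrix (Fin n) (Fin n) ℝ) (hSxx : Sxx.IsSymm)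
    (Sxy : Matrix (Fin n) (Fin m) ℝ)
    (Syy : Matrix (Fin m) (Fin m) ℝ) (hSyy : Syy.PosDef)
    (M : Matrix (Fin p) (Fin n) ℝ)
    (P : Matrix (Fin p) (Fin p) ℝ) (hP : P.IsSymm)
    (l : Fin m → ℝ) (hl : ∀ i, 0 < l i)
    (S : Matrix (Fin m) (Fin m) ℝ) (hSdef : S = Matrix.diagonal l)
    (A : Matrix (Fin p) (Fin p) ℝ) (hA : A = -(M * Sxx * Mᵀ) + M * Sxy * S * Sxyᵀ * Mᵀ)
    (B : Matrix (Fin p) (Fin m) ℝ) (hB : B = M * Sxy * S)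
    (D : Matrix (Fin m) (Fin m) ℝ) (hD : D = Syy⁻¹ + S)
    (hLMI : (Matrix.fromBlocks (P + A) B Bᵀ D).PosSemidef) :
    (P - M * (Sxx - Sxy * (Syy + S⁻¹)⁻¹ * Sxyᵀ) * Mᵀ).PosSemidef :=
  stmt_4_general Sxx Sxy Syy hSyy M P l hl S hSdef A hA B hB D hD hLMI
end

section
/- Let Σxx and Σyy be n×n and m×m real symmetric matrices, Σxy an n×m real matrix, and R an m×m real symmetric positive definite matrix. If the (n+m)×(n+m) block matrix [[Σxx, Σxy], [Σxyᵀ, Σyy]] is positive semidefinite, then Σxx − Σxy (Σyy + R)⁻¹ Σxyᵀ is positive semidefinite. -/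
open Matrix

/-! Adding the positive definite `R` to the lower-right block of the positive semidefinite joint
matrix keeps it positive semidefinite and makes that block `Σyy + R` positive definite, hence
invertible. The Schur complement criterion for positive semidefiniteness of a block matrix then
turns the semidefiniteness of the perturbed joint matrix into that of
`Σxx - Σxy (Σyy + R)⁻¹ Σxyᵀ`. -/

namespace Matrix

variable {m n 𝕜 : Type*}

theorem PosSemidef.posSemidef_of_fromBlocks₂₂ [Ring 𝕜] [PartialOrder 𝕜] [StarRing 𝕜]
    {A : Matrix m m 𝕜} {B : Matrix m n 𝕜} {C : Matrix n m 𝕜} {D : Matrix n n 𝕜}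
    (h : (fromBlocks A B C D).PosSemidef) : D.PosSemidef :=
  h.submatrix Sum.inr

variable [Fintype m] [Fintype n] [DecidableEq n]
  [Field 𝕜] [PartialOrder 𝕜] [StarRing 𝕜] [StarOrderedRing 𝕜]

-- Its Schur complement `0 - 0 * D⁻¹ * 0` vanishes.
theorem PosDef.posSemidef_fromBlocks_zero {D : Matrix n n 𝕜} (hD : D.PosDef) :
    (fromBlocks (0 : Matrix m m 𝕜) 0 0 D).PosSemidef := by
  have := hD.isUnit.invertible
  simpa using (PosDef.fromBlocks₂₂ (0 : Matrix m m 𝕜) 0 hD).2 (by simpa using PosSemidef.zero)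

theorem PosSemidef.fromBlocks_add_posDef₂₂ {A : Matrix m m 𝕜} {B : Matrix m n 𝕜}
    {D R : Matrix n n 𝕜} (h : (fromBlocks A B Bᴴ D).PosSemidef) (hR : R.PosDef) :
    (fromBlocks A B Bᴴ (D + R)).PosSemidef := by
  simpa [fromBlocks_add] using h.add (hR.posSemidef_fromBlocks_zero (m := m))

theorem PosSemidef.schur_complement_add_posDef₂₂ {A : Matrix m m 𝕜} {B : Matrix m n 𝕜}
    {D R : Matrix n n 𝕜} (h : (fromBlocks A B Bᴴ D).PosSemidef) (hR : R.PosDef) :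
    (A - B * (D + R)⁻¹ * Bᴴ).PosSemidef := by
  have hDR : (D + R).PosDef := PosDef.posSemidef_add h.posSemidef_of_fromBlocks₂₂ hR
  have := hDR.isUnit.invertible
  exact (PosDef.fromBlocks₂₂ A B hDR).1 (h.fromBlocks_add_posDef₂₂ hR)

end Matrix

theorem stmt_5_general {n m : ℕ} (Sxx : Matrix (Fin n) (Fin n) ℝ)
    (Syy : Matrix (Fin m) (Fin m) ℝ)
    (Sxy : Matrix (Fin n) (Fin m) ℝ)
    (R : Matrix (Fin m) (Fin m) ℝ) (hR : R.PosDef)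
    (hjoint : (Matrix.fromBlocks Sxx Sxy Sxyᵀ Syy).PosSemidef) :
    (Sxx - Sxy * (Syy + R)⁻¹ * Sxyᵀ).PosSemidef := by
  simpa using hjoint.schur_complement_add_posDef₂₂ (B := Sxy) hR

/-- If the joint covariance [[Σxx, Σxy], [Σxyᵀ, Σyy]] is positive semidefinite
and R is positive definite, then the Kalman posterior covariance
Σxx − Σxy (Σyy + R)⁻¹ Σxyᵀ is positive semidefinite. -/
theorem stmt_5 {n m : ℕ} (Sxx : Matrix (Fin n) (Fin n) ℝ) (hSxx : Sxx.IsSymm)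
    (Syy : Matrix (Fin m) (Fin m) ℝ) (hSyy : Syy.IsSymm)
    (Sxy : Matrix (Fin n) (Fin m) ℝ)
    (R : Matrix (Fin m) (Fin m) ℝ) (hR : R.PosDef)
    (hjoint : (Matrix.fromBlocks Sxx Sxy Sxyᵀ Syy).PosSemidef) :
    (Sxx - Sxy * (Syy + R)⁻¹ * Sxyᵀ).PosSemidef :=
  stmt_5_general Sxx Syy Sxy R hR hjoint
end
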